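/- arXiv:0908.1210 — 2 statements merged into one kernel-verified Lean document; each statement's English description precedes it below -/
import Mathlib

section
/- Let α be an algebraic integer of degree at most d over ℚ all of whose complex conjugates (i.e., all roots of its minimal polynomial) have absolute value at most M, and let a be an integer with |a| ≤ M. If a rational prime p > (2M)^d divides the algebraic norm of α − a (a rational integer), then α = a. -/
theorem stmt_3 (K : Type*) [Field K] [NumberField K] (d : ℕ)
    (hd : Module.finrank ℚ K = d) (α : NumberField.RingOfIntegers K)
    (M : ℝ) (hM : 0 ≤ M)
    (hσ : ∀ σ : K →+* ℂ, ‖σ (α : K)‖ ≤ M)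
    (a : ℤ) (ha : (|a| : ℝ) ≤ M)
    (p : ℕ) (hp : p.Prime) (hpB : (p : ℝ) > (2 * M) ^ d)
    (hdvd : (p : ℤ) ∣ Algebra.norm ℤ (α - (a : NumberField.RingOfIntegers K))) :
    α = (a : NumberField.RingOfIntegers K) := by
  set x := α - (a : NumberField.RingOfIntegers K) with hx
  set N : ℤ := Algebra.norm ℤ x with hN
  -- bound |N|
  have hbound : (|N| : ℝ) ≤ (2 * M) ^ d := by
    have h1 : (N : ℚ) = Algebra.norm ℚ (x : K) := Algebra.coe_norm_int x
    have h2 : ‖(algebraMap ℚ ℂ) (Algebra.norm ℚ (x : K))‖ =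
        ∏ σ : K →ₐ[ℚ] ℂ, ‖σ (x : K)‖ := by
      rw [Algebra.norm_eq_prod_embeddings, norm_prod]
    have hcard : Fintype.card (K →ₐ[ℚ] ℂ) = d := by
      rw [AlgHom.card, hd]
    have hfac : ∀ σ : K →ₐ[ℚ] ℂ, ‖σ (x : K)‖ ≤ 2 * M := by
      intro σ
      have hxx : ((x : NumberField.RingOfIntegers K) : K) = (α : K) - ((a : ℤ) : K) := by
        push_cast [hx]; norm_cast
      rw [hxx, map_sub]
      calc ‖σ (α : K) - σ ((a : ℤ) : K)‖ ≤
          ‖σ (α : K)‖ + ‖σ ((a : ℤ) : K)‖ := by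
            simpa using norm_sub_le (σ (α : K)) (σ ((a : ℤ) : K))
        _ ≤ M + M := by
            refine add_le_add (hσ σ.toRingHom) ?_
            have : σ ((a : ℤ) : K) = (a : ℂ) := by push_cast; simp
            rw [this]
            simpa using ha
        _ = 2 * M := by ring
    have key : (|N| : ℝ) = ∏ σ : K →ₐ[ℚ] ℂ, ‖σ (x : K)‖ := by
      rw [← h2, ← h1]
      push_cast
      simp
    rw [key]
    calc ∏ σ : K →ₐ[ℚ] ℂ, ‖σ (x : K)‖ ≤ ∏ σ : K →ₐ[ℚ] ℂ, (2 * M) :=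
        Finset.prod_le_prod (fun σ _ => norm_nonneg _) (fun σ _ => hfac σ)
      _ = (2 * M) ^ d := by rw [Finset.prod_const, Finset.card_univ, hcard]
  have hNzero : N = 0 := by
    by_contra h
    have : (p : ℤ) ≤ |N| := Int.le_of_dvd (abs_pos.mpr h) ((dvd_abs _ _).mpr hdvd)
    have : (p : ℝ) ≤ (|N| : ℝ) := by exact_mod_cast this
    linarith
  have hxz : x = 0 := by
    have : Algebra.norm ℚ (x : K) = 0 := by
      have h1 : (N : ℚ) = Algebra.norm ℚ (x : K) := Algebra.coe_norm_int x
      rw [← h1, hNzero]; simp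
    have hc := Algebra.norm_eq_zero_iff.mp this
    exact NumberField.RingOfIntegers.coe_eq_zero_iff.mp hc
  have := sub_eq_zero.mp (hx ▸ hxz)
  exact this
end

section
/- Let α be an algebraic integer whose minimal polynomial over ℚ has degree d, and suppose every complex root of this minimal polynomial has absolute value at most M. If α is congruent to a rational integer a modulo a prime ideal 𝔭 above a rational prime p in the ring of integers of ℚ(α), |a| ≤ M, and p > (2M)^d, then α = a; in particular α is a rational integer. -/
theorem stmt_4 (K : Type*) [Field K] [NumberField K] (d : ℕ)
    (α : NumberField.RingOfIntegers K)
    (hgen : IntermediateField.adjoin ℚ {(α : K)} = ⊤)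
    (hdeg : (minpoly ℚ (α : K)).natDegree = d)
    (M : ℝ) (hM : 0 ≤ M)
    (hroots : ∀ z ∈ ((minpoly ℚ (α : K)).map (algebraMap ℚ ℂ)).roots, ‖z‖ ≤ M)
    (a : ℤ) (ha : (|a| : ℝ) ≤ M)
    (p : ℕ) (hp : p.Prime) (hpB : (p : ℝ) > (2 * M) ^ d)
    (𝔭 : Ideal (NumberField.RingOfIntegers K)) (hmax : 𝔭.IsMaximal)
    (hover : (p : NumberField.RingOfIntegers K) ∈ 𝔭)
    (hcong : α - (a : NumberField.RingOfIntegers K) ∈ 𝔭) :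
    α = (a : NumberField.RingOfIntegers K) := by
  by_contra hne
  set β : NumberField.RingOfIntegers K := α - (a : NumberField.RingOfIntegers K) with hβ
  have hβ0 : β ≠ 0 := sub_ne_zero.mpr hne
  have hint : IsIntegral ℚ (α : K) := IsIntegral.of_finite ℚ _
  have hfr : Module.finrank ℚ K = d := by
    rw [← hdeg, ← IntermediateField.adjoin.finrank hint, hgen,
      IntermediateField.finrank_top']
  -- p divides the norm of β
  have hdvdN : (p : ℤ) ∣ Algebra.norm ℤ β := by
    have h1 : (Ideal.absNorm 𝔭 : ℤ) ∣ Algebra.norm ℤ β :=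
      Ideal.absNorm_dvd_norm_of_mem hcong
    have h2 : Ideal.absNorm 𝔭 ∣
        p ^ Fintype.card (Module.Free.ChooseBasisIndex ℤ (NumberField.RingOfIntegers K)) := by
      have h3 := Ideal.absNorm_dvd_norm_of_mem (I := 𝔭)
        (x := (p : NumberField.RingOfIntegers K)) hover
      rw [show ((p : ℕ) : NumberField.RingOfIntegers K)
          = algebraMap ℤ (NumberField.RingOfIntegers K) (p : ℤ) by push_cast; rfl,
        Algebra.norm_algebraMap_of_basis
          (Module.Free.chooseBasis ℤ (NumberField.RingOfIntegers K))] at h3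
      exact_mod_cast h3
    obtain ⟨k, hk, hkeq⟩ := (Nat.dvd_prime_pow hp).mp h2
    have hk0 : k ≠ 0 := by
      rintro rfl
      simp only [pow_zero] at hkeq
      exact hmax.ne_top (Ideal.absNorm_eq_one_iff.mp hkeq)
    have : (p : ℕ) ∣ Ideal.absNorm 𝔭 := hkeq ▸ dvd_pow_self p hk0
    exact dvd_trans (Int.natCast_dvd_natCast.mpr this) h1
  have hN0 : Algebra.norm ℤ β ≠ 0 := by
    intro h
    apply hβ0
    have h2 : Algebra.norm ℚ (β : K) = 0 := by
      rw [← Algebra.coe_norm_int, h]; norm_num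
    have h3 : (β : K) = 0 := Algebra.norm_eq_zero_iff.mp h2
    exact_mod_cast h3
  have hple : (p : ℤ) ≤ |Algebra.norm ℤ β| :=
    Int.le_of_dvd (abs_pos.mpr hN0) ((dvd_abs _ _).mpr hdvdN)
  -- bound the norm
  have hcast : ((Algebra.norm ℤ β : ℤ) : ℂ) = algebraMap ℚ ℂ (Algebra.norm ℚ (β : K)) := by
    rw [eq_ratCast, ← Algebra.coe_norm_int]; norm_cast
  have hbound : |((Algebra.norm ℤ β : ℤ) : ℝ)| ≤ (2 * M) ^ d := by
    have key : ‖algebraMap ℚ ℂ (Algebra.norm ℚ (β : K))‖ ≤ (2 * M) ^ d := by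
      rw [Algebra.norm_eq_prod_embeddings, norm_prod]
      calc ∏ σ : K →ₐ[ℚ] ℂ, ‖σ (β : K)‖
          ≤ ∏ _σ : K →ₐ[ℚ] ℂ, (2 * M) := by
            apply Finset.prod_le_prod (fun _ _ => norm_nonneg _)
            intro σ _
            have hcoeβ : (β : K) = (α : K) - ((a : ℤ) : K) := by
              rw [hβ]
              push_cast
              norm_cast
            have hσa : σ (((a : ℤ) : K)) = ((a : ℤ) : ℂ) := map_intCast σ a
            have hroot : σ (α : K) ∈ ((minpoly ℚ (α : K)).map (algebraMap ℚ ℂ)).roots := by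
              rw [Polynomial.mem_roots (Polynomial.map_ne_zero (minpoly.ne_zero hint))]
              show Polynomial.eval _ _ = 0
              rw [Polynomial.eval_map, ← Polynomial.aeval_def,
                Polynomial.aeval_algHom_apply, minpoly.aeval, map_zero]
            have h1 : ‖σ (α : K)‖ ≤ M := hroots _ hroot
            calc ‖σ (β : K)‖ = ‖σ (α : K) - ((a : ℤ) : ℂ)‖ := by
                  rw [hcoeβ, map_sub, hσa]
              _ ≤ ‖σ (α : K)‖ + ‖((a : ℤ) : ℂ)‖ := norm_sub_le _ _
              _ ≤ M + M := by
                  refine add_le_add h1 ?_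
                  rw [Complex.norm_intCast]
                  exact_mod_cast ha
              _ = 2 * M := by ring
        _ = (2 * M) ^ d := by
            rw [Finset.prod_const, Finset.card_univ, AlgHom.card, hfr]
    calc |((Algebra.norm ℤ β : ℤ) : ℝ)|
        = ‖((Algebra.norm ℤ β : ℤ) : ℂ)‖ := (Complex.norm_intCast _).symm
      _ = ‖algebraMap ℚ ℂ (Algebra.norm ℚ (β : K))‖ := by rw [hcast]
      _ ≤ (2 * M) ^ d := key
  have hfin : (p : ℝ) ≤ |((Algebra.norm ℤ β : ℤ) : ℝ)| := by
    rw [← Int.cast_abs]; exact_mod_cast hple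
  linarith
end
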